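/- arXiv:1711.10213 — 2 statements merged into one kernel-verified Lean document; each statement's English description precedes it below -/
import Mathlib

section
/- If the boxes generated by repeated bisection along a longest edge are such that each split halves the longest edge, then after m splits of a box with initial ℓ∞-diameter D, any resulting sub-box obtained by always splitting the current longest edge has ℓ∞-diameter at most D·(1/2)^{⌊m/n⌋}, where n is the dimension. In particular, the diameters of nested sub-boxes converge to 0. -/
/-- Bisection along a longest edge: let d m : Fin n → ℝ be the (nonnegative)
edge lengths of the box after m splits, with ℓ∞-diameter of the initial box
equal to D. If each split halves a longest edge and keeps the others, then
after m splits the ℓ∞-diameter is at most D·(1/2)^⌊m/n⌋; in particular the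
diameters tend to 0. -/
theorem bisection_diameter_decay {n : ℕ} (hn : 0 < n)
    (d : ℕ → Fin n → ℝ) (D : ℝ)
    (hnonneg : ∀ m i, 0 ≤ d m i)
    (hD : Finset.univ.sup' ⟨⟨0, hn⟩, Finset.mem_univ _⟩ (d 0) = D)
    (hstep : ∀ m, ∃ k, (∀ i, d m i ≤ d m k) ∧
      d (m + 1) k = d m k / 2 ∧ ∀ i, i ≠ k → d (m + 1) i = d m i) :
    (∀ m, Finset.univ.sup' ⟨⟨0, hn⟩, Finset.mem_univ _⟩ (d m) ≤
        D * (1 / 2) ^ (m / n)) ∧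
    Filter.Tendsto
      (fun m => Finset.univ.sup' ⟨⟨0, hn⟩, Finset.mem_univ _⟩ (d m))
      Filter.atTop (nhds 0) := by
  have ne : (Finset.univ : Finset (Fin n)).Nonempty := ⟨⟨0, hn⟩, Finset.mem_univ _⟩
  set f : ℕ → ℝ := fun m => Finset.univ.sup' ne (d m) with hf
  have hmono : ∀ m i, d (m + 1) i ≤ d m i := by
    intro m i
    obtain ⟨k, hk, hhalf, hoth⟩ := hstep m
    by_cases h : i = k
    · subst h; rw [hhalf]; linarith [hnonneg m i]
    · rw [hoth i h]
  have hmono' : ∀ m j i, d (m + j) i ≤ d m i := by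
    intro m j
    induction j with
    | zero => intro i; simp
    | succ j ih => intro i; exact le_trans (hmono (m + j) i) (ih i)
  have key : ∀ m, f (m + n) ≤ f m / 2 := by
    intro m
    set S := f m with hS
    have hcard : ∀ j, ((Finset.univ.filter (fun i => S / 2 < d (m + j) i)).card ≤ n - j) := by
      intro j
      induction j with
      | zero =>
        simpa using Finset.card_filter_le Finset.univ (fun i => S / 2 < d (m + 0) i)
      | succ j ih =>
        obtain ⟨k, hk, hhalf, hoth⟩ := hstep (m + j)
        have hsub : (Finset.univ.filter (fun i => S / 2 < d (m + (j + 1)) i)) ⊆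
            Finset.univ.filter (fun i => S / 2 < d (m + j) i) := by
          intro i hi
          simp only [Finset.mem_filter, Finset.mem_univ, true_and] at hi ⊢
          calc S / 2 < d (m + (j + 1)) i := hi
            _ = d (m + j + 1) i := by ring_nf
            _ ≤ d (m + j) i := hmono (m + j) i
        by_cases hpos : ∃ i, S / 2 < d (m + j) i
        · obtain ⟨i0, hi0⟩ := hpos
          have hk2 : S / 2 < d (m + j) k := lt_of_lt_of_le hi0 (hk i0)
          have hkS : d (m + j) k ≤ S :=
            le_trans (hmono' m j k) (Finset.le_sup' (d m) (Finset.mem_univ k))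
          have hknot : ¬ S / 2 < d (m + (j + 1)) k := by
            have : d (m + (j + 1)) k = d (m + j) k / 2 := by rw [← hhalf]; ring_nf
            rw [this]; push_neg; linarith
          have hsub' : (Finset.univ.filter (fun i => S / 2 < d (m + (j + 1)) i)) ⊆
              (Finset.univ.filter (fun i => S / 2 < d (m + j) i)).erase k := by
            intro i hi
            refine Finset.mem_erase.2 ⟨?_, hsub hi⟩
            rintro rfl
            simp only [Finset.mem_filter, Finset.mem_univ, true_and] at hi
            exact hknot hi
          have hkmem : k ∈ Finset.univ.filter (fun i => S / 2 < d (m + j) i) := by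
            simp [hk2]
          have hc := Finset.card_le_card hsub'
          rw [Finset.card_erase_of_mem hkmem] at hc
          omega
        · push_neg at hpos
          have hempty : (Finset.univ.filter (fun i => S / 2 < d (m + (j + 1)) i)) = ∅ := by
            apply Finset.eq_empty_of_forall_notMem
            intro i hi
            exact absurd (hsub hi) (by simp [hpos i])
          simp [hempty]
    have h0 := hcard n
    have hall : ∀ i, d (m + n) i ≤ S / 2 := by
      intro i
      by_contra h
      push_neg at h
      have hi : i ∈ Finset.univ.filter (fun j => S / 2 < d (m + n) j) := by simp [h]
      have := Finset.card_pos.2 ⟨i, hi⟩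
      omega
    exact Finset.sup'_le ne (d (m + n)) fun i _ => hall i
  have hD0 : f 0 = D := hD
  have hfle : ∀ m, f m ≤ D := by
    intro m
    rw [← hD0]
    apply Finset.sup'_le ne (d m)
    intro i _
    have := hmono' 0 m i
    simp only [Nat.zero_add] at this
    exact le_trans this (Finset.le_sup' (d 0) (Finset.mem_univ i))
  have hbound : ∀ m, f m ≤ D * (1 / 2) ^ (m / n) := by
    intro m
    induction m using Nat.strong_induction_on with
    | _ m ih =>
      by_cases h : m < n
      · rw [Nat.div_eq_of_lt h]; simpa using hfle m
      · push_neg at h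
        have hm : m - n + n = m := by omega
        have h1 := key (m - n)
        rw [hm] at h1
        have h2 := ih (m - n) (by omega)
        have hdiv : m / n = (m - n) / n + 1 := by
          rw [Nat.div_eq_sub_div hn h]
        rw [hdiv, pow_succ]
        calc f m ≤ f (m - n) / 2 := h1
          _ ≤ D * (1 / 2) ^ ((m - n) / n) / 2 := by linarith
          _ = D * ((1 / 2) ^ ((m - n) / n) * (1 / 2)) := by ring
  refine ⟨hbound, ?_⟩
  have h0le : ∀ m, 0 ≤ f m :=
    fun m => le_trans (hnonneg m ⟨0, hn⟩) (Finset.le_sup' (d m) (Finset.mem_univ _))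
  have hdivtop : Filter.Tendsto (fun m : ℕ => m / n) Filter.atTop Filter.atTop := by
    apply Filter.tendsto_atTop.2
    intro b
    apply Filter.eventually_atTop.2
    exact ⟨b * n, fun m hm => (Nat.le_div_iff_mul_le hn).2 hm⟩
  have hpow : Filter.Tendsto (fun m : ℕ => D * (1 / 2 : ℝ) ^ (m / n)) Filter.atTop (nhds 0) := by
    have h1 : Filter.Tendsto (fun j : ℕ => (1 / 2 : ℝ) ^ j) Filter.atTop (nhds 0) := by
      apply tendsto_pow_atTop_nhds_zero_of_lt_one <;> norm_num
    have h2 := (h1.comp hdivtop).const_mul D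
    simpa using h2
  exact tendsto_of_tendsto_of_tendsto_of_le_of_le tendsto_const_nhds hpow h0le hbound
end

section
/- Let V_i = e_i + i·f_i with |V_i| > 0, |V_j| > 0 and phase angles θ_i, θ_j. If the phase angle difference satisfies |θ_i − θ_j| ≤ Δ < π/2, then with X_{i,j} = e_i e_j, X_{n+i,n+j} = f_i f_j, X_{j,n+i} = e_j f_i, X_{i,n+j} = e_i f_j, the inequality |X_{j,n+i} − X_{i,n+j}| ≤ (X_{i,j} + X_{n+i,n+j})·tan Δ holds. -/
/-- Validity of the linearized phase-angle-difference constraint: with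
e_i = |V_i| cos θ_i, f_i = |V_i| sin θ_i, and |θ_i − θ_j| ≤ Δ < π/2 (Δ ≥ 0),
|e_j f_i − e_i f_j| ≤ (e_i e_j + f_i f_j) · tan Δ. -/
theorem pad_constraint (Vi Vj θi θj Δ : ℝ) (hVi : 0 < Vi) (hVj : 0 < Vj)
    (hΔ : |θi - θj| ≤ Δ) (hΔlt : Δ < Real.pi / 2) :
    letI ei := Vi * Real.cos θi
    letI fi := Vi * Real.sin θi
    letI ej := Vj * Real.cos θj
    letI fj := Vj * Real.sin θj
    |ej * fi - ei * fj| ≤ (ei * ej + fi * fj) * Real.tan Δ := by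
  set d := θi - θj with hd
  have hΔ0 : 0 ≤ Δ := le_trans (abs_nonneg _) hΔ
  have hcosΔ : 0 < Real.cos Δ := Real.cos_pos_of_mem_Ioo ⟨by linarith [Real.pi_pos], hΔlt⟩
  have hdlt : |d| < Real.pi / 2 := lt_of_le_of_lt hΔ hΔlt
  have hcosd : 0 < Real.cos d := by
    have := Real.cos_pos_of_mem_Ioo (x := d) ⟨by cases abs_lt.mp hdlt; linarith, (abs_lt.mp hdlt).2⟩
    exact this
  -- |sin d| ≤ cos d * tan Δ
  have hsin : |Real.sin d| ≤ Real.cos d * Real.tan Δ := by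
    have hd1 : -(Real.pi/2) < d := (abs_lt.mp hdlt).1
    have hd2 : d < Real.pi/2 := (abs_lt.mp hdlt).2
    have h1 : |Real.sin d| = Real.sin |d| := by
      rcases le_or_gt 0 d with h | h
      · rw [abs_of_nonneg h, abs_of_nonneg
          (Real.sin_nonneg_of_nonneg_of_le_pi h (by linarith [Real.pi_pos]))]
      · rw [abs_of_neg h, Real.sin_neg, abs_of_nonpos]
        exact Real.sin_nonpos_of_nonpos_of_neg_pi_le h.le (by linarith [Real.pi_pos])
    have h2 : Real.sin |d| ≤ Real.sin Δ :=
      Real.sin_le_sin_of_le_of_le_pi_div_two (by linarith [Real.pi_pos, abs_nonneg d])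
        (le_of_lt hΔlt) hΔ
    have h3 : Real.cos Δ ≤ Real.cos d := by
      rw [← Real.cos_abs d]
      exact Real.cos_le_cos_of_nonneg_of_le_pi (abs_nonneg _)
        (by linarith [Real.pi_pos]) hΔ
    rw [Real.tan_eq_sin_div_cos, h1]
    calc Real.sin |d| ≤ Real.sin Δ := h2
      _ = Real.cos Δ * (Real.sin Δ / Real.cos Δ) := by field_simp
      _ ≤ Real.cos d * (Real.sin Δ / Real.cos Δ) := by
          apply mul_le_mul_of_nonneg_right h3
          have hsΔ : 0 ≤ Real.sin Δ := Real.sin_nonneg_of_nonneg_of_le_pi hΔ0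
            (by linarith [Real.pi_pos])
          positivity
  have e1 : Vj * Real.cos θj * (Vi * Real.sin θi) - Vi * Real.cos θi * (Vj * Real.sin θj)
      = Vi * Vj * Real.sin d := by
    simp only [hd, Real.sin_sub]; ring
  have e2 : Vi * Real.cos θi * (Vj * Real.cos θj) + Vi * Real.sin θi * (Vj * Real.sin θj)
      = Vi * Vj * Real.cos d := by
    simp only [hd, Real.cos_sub]; ring
  rw [e1, e2, abs_mul, abs_of_pos (by positivity : (0:ℝ) < Vi * Vj)]
  nlinarith [mul_le_mul_of_nonneg_left hsin (le_of_lt (mul_pos hVi hVj))]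
end
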